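/- arXiv:2403.05048 — 3 statements merged into one kernel-verified Lean document; each statement's English description precedes it below -/
import Mathlib

section
/- Let F be a field, let k ≥ 2 and n ≥ 2k−1 be integers, and let x_1, …, x_k ∈ F with x_k ≠ 0. Let T be the (k−1)×(k−1) matrix over F with (T)_{p,1} = −x_{k−p}/x_k for 1 ≤ p ≤ k−1, (T)_{p,p+1} = 1 for 1 ≤ p ≤ k−2, and all other entries 0. For a (k−1)×(k−1) matrix Y over F and an integer s ≥ 2k−1, let N_s(Y) denote the s×s matrix whose (p,q) entry equals x_{k+q−p} whenever 0 ≤ p−q ≤ k−1, equals Y_{p, q−s+k−1} whenever 1 ≤ p ≤ k−1 and s−k+2 ≤ q ≤ s, and equals 0 otherwise. Then for every s with 2k−1 ≤ s ≤ n and every (k−1)×(k−1) matrix Y, det N_s(Y) = x_k · det N_{s−1}(T Y). -/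
open Matrix

/-- The `s × s` matrix `N_s(Y)`: banded lower-triangular Toeplitz part with entries
`x_{k+q-p}` on the band `0 ≤ p - q ≤ k-1`, with the `(k-1) × (k-1)` matrix `Y` placed
in the upper-right corner (rows `1 ≤ p ≤ k-1`, columns `s-k+2 ≤ q ≤ s`, where the
`(p,q)` entry of `N_s(Y)` is `Y_{p, q-s+k-1}`), and zeros elsewhere.
(All indices in this description are 1-based; `Fin` indices below are 0-based.) -/
def Nmat {F : Type*} [Field F] (k : ℕ) (x : ℕ → F) (s : ℕ)
    (Y : Matrix (Fin (k - 1)) (Fin (k - 1)) F) : Matrix (Fin s) (Fin s) F :=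
  fun p q =>
    if q.val ≤ p.val ∧ p.val - q.val ≤ k - 1 then x (k - (p.val - q.val))
    else if h : p.val < k - 1 ∧ s - k + 1 ≤ q.val ∧ q.val - (s - k + 1) < k - 1 then
      Y ⟨p.val, h.1⟩ ⟨q.val - (s - k + 1), h.2.2⟩
    else 0

/-- The `(k-1) × (k-1)` elimination matrix `T`: `T_{p,1} = -x_{k-p}/x_k` for
`1 ≤ p ≤ k-1`, `T_{p,p+1} = 1` for `1 ≤ p ≤ k-2`, all other entries `0`
(1-based description; `Fin` indices below are 0-based). -/
noncomputable def Tmat {F : Type*} [Field F] (k : ℕ) (x : ℕ → F) :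
    Matrix (Fin (k - 1)) (Fin (k - 1)) F :=
  fun p q =>
    if q.val = 0 then -x (k - 1 - p.val) / x k
    else if q.val = p.val + 1 then 1 else 0

/-!
Subtracting `x_{k-p} / x_k` times the first row from row `p` clears the first column below the
pivot `x_k`, and expanding along that column leaves the Schur complement of the pivot. Because
`s ≥ 2k - 1`, the corner entries of the first row lie in columns that the band does not reach in
rows `2, …, k`, so away from the corner the Schur complement is again the banded Toeplitz matrix
of size `s - 1`, while in the corner the row operations act on `Y` exactly as `T` does: shift the
rows of `Y` up by one and add multiples of its first row.
-/

namespace Matrix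

variable {K : Type*} [Field K] {m : ℕ}

theorem det_eq_mul_det_schur (M : Matrix (Fin (m + 1)) (Fin (m + 1)) K) (h : M 0 0 ≠ 0) :
    M.det = M 0 0 *
      (of fun i j : Fin m => M i.succ j.succ - M i.succ 0 / M 0 0 * M 0 j.succ).det := by
  let c : Fin (m + 1) → K := Fin.cases 0 fun i => M i.succ 0 / M 0 0
  let B : Matrix (Fin (m + 1)) (Fin (m + 1)) K := of fun i j => M i j - c i * M 0 j
  have hMB : M.det = B.det :=
    det_eq_of_forall_row_eq_smul_add_const c 0 rfl fun i j => by simp [B, c]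
  have hB_col : ∀ i : Fin m, B i.succ 0 = 0 := fun i => by simp [B, c, h]
  rw [hMB, det_succ_column_zero, Fin.sum_univ_succ]
  simp only [hB_col, mul_zero, zero_mul, Finset.sum_const_zero, add_zero, Fin.val_zero, pow_zero,
    one_mul, Fin.succAbove_zero]
  congr 1
  simp [B, c]

variable {α : Type*} [Zero α] {a b : ℕ}

def extendByZero (A : Matrix (Fin a) (Fin b) α) (i j : ℕ) : α :=
  if h : i < a ∧ j < b then A ⟨i, h.1⟩ ⟨j, h.2⟩ else 0

theorem extendByZero_of_not_lt (A : Matrix (Fin a) (Fin b) α) {i j : ℕ}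
    (h : ¬(i < a ∧ j < b)) : A.extendByZero i j = 0 :=
  dif_neg h

end Matrix

section

variable {F : Type*} [Field F] (k : ℕ) (x : ℕ → F)

/-- The entries of `Nmat k x s`, with the corner block given as a function on `ℕ × ℕ`, so that
all index shifts below are plain natural-number arithmetic. -/
def bandCornerEntry (s : ℕ) (Z : ℕ → ℕ → F) (p q : ℕ) : F :=
  if q ≤ p ∧ p - q ≤ k - 1 then x (k - (p - q))
  else if s - k + 1 ≤ q then Z p (q - (s - k + 1)) else 0

def tmatMulNat (Z : ℕ → ℕ → F) (i j : ℕ) : F :=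
  (if i < k - 1 then -x (k - 1 - i) / x k * Z 0 j else 0) + Z (i + 1) j

theorem Nmat_apply {s : ℕ} (Y : Matrix (Fin (k - 1)) (Fin (k - 1)) F) (p q : Fin s) :
    Nmat k x s Y p q = bandCornerEntry k x s Y.extendByZero p q := by
  have := q.isLt
  unfold Nmat bandCornerEntry Matrix.extendByZero
  split_ifs <;> first | rfl | omega

theorem extendByZero_Tmat_mul (Y : Matrix (Fin (k - 1)) (Fin (k - 1)) F) :
    (Tmat k x * Y).extendByZero = tmatMulNat k x Y.extendByZero := by
  ext i j
  unfold tmatMulNat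
  by_cases h : i < k - 1 ∧ j < k - 1
  · have hT : ∀ l : Fin (k - 1), Tmat k x ⟨i, h.1⟩ l * Y l ⟨j, h.2⟩ =
        ((if (l : ℕ) = 0 then -x (k - 1 - i) / x k else 0) + if (l : ℕ) = i + 1 then 1 else 0) *
          Y.extendByZero l j := by
      intro l
      simp only [Tmat, Matrix.extendByZero, l.isLt, h.2, and_self, dite_true]
      split_ifs <;> first | omega | ring
    rw [Matrix.extendByZero, dif_pos h, Matrix.mul_apply, Finset.sum_congr rfl fun l _ => hT l,
      Fin.sum_univ_eq_sum_range (fun l => ((if l = 0 then -x (k - 1 - i) / x k else 0) +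
        if l = i + 1 then 1 else 0) * Y.extendByZero l j)]
    simp only [add_mul, ite_mul, one_mul, zero_mul, Finset.sum_add_distrib, Finset.sum_ite_eq',
      Finset.mem_range]
    rw [if_pos (by omega), if_pos h.1,
      ite_eq_left_iff.mpr fun _ => (Y.extendByZero_of_not_lt (i := i + 1) (by omega)).symm]
  · have hsucc : Y.extendByZero (i + 1) j = 0 := Y.extendByZero_of_not_lt (by omega)
    rw [(Tmat k x * Y).extendByZero_of_not_lt h, hsucc, add_zero]
    split_ifs with hi
    · have hzero : Y.extendByZero 0 j = 0 := Y.extendByZero_of_not_lt (by omega)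
      rw [hzero, mul_zero]
    · rfl

theorem bandCornerEntry_succ_zero (s : ℕ) (Z : ℕ → ℕ → F) (p : ℕ) :
    bandCornerEntry k x s Z (p + 1) 0 = if p < k - 1 then x (k - 1 - p) else 0 := by
  unfold bandCornerEntry
  split_ifs <;> first | omega | rfl | (congr 1; omega)

theorem bandCornerEntry_zero_succ {s : ℕ} (hs : k ≤ s) (Z : ℕ → ℕ → F) (q : ℕ) :
    bandCornerEntry k x (s + 1) Z 0 (q + 1) =
      if s - k + 1 ≤ q then Z 0 (q - (s - k + 1)) else 0 := by
  unfold bandCornerEntry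
  split_ifs <;> first | omega | rfl | (congr 1; omega)

theorem bandCornerEntry_succ_succ {s : ℕ} (hs : k ≤ s) (Z : ℕ → ℕ → F) (p q : ℕ) :
    bandCornerEntry k x (s + 1) Z (p + 1) (q + 1) =
      bandCornerEntry k x s (fun i j => Z (i + 1) j) p q := by
  unfold bandCornerEntry
  dsimp only
  split_ifs <;> first | omega | rfl | (congr 1; omega)

theorem bandCornerEntry_schur {m : ℕ} (hk : 2 ≤ k) (hm : 2 * k - 2 ≤ m) (Z : ℕ → ℕ → F)
    (p q : ℕ) :
    bandCornerEntry k x (m + 1) Z (p + 1) (q + 1) -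
        bandCornerEntry k x (m + 1) Z (p + 1) 0 / x k * bandCornerEntry k x (m + 1) Z 0 (q + 1) =
      bandCornerEntry k x m (tmatMulNat k x Z) p q := by
  have hkm : k ≤ m := by omega
  rw [bandCornerEntry_succ_succ k x hkm, bandCornerEntry_succ_zero,
    bandCornerEntry_zero_succ k x hkm]
  unfold bandCornerEntry tmatMulNat
  split_ifs <;> first | omega | ring

end

theorem stmt_1_general {F : Type*} [Field F] (k : ℕ) (hk : 2 ≤ k)
    (x : ℕ → F) (hx : x k ≠ 0)
    (s : ℕ) (hs1 : 2 * k - 1 ≤ s)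
    (Y : Matrix (Fin (k - 1)) (Fin (k - 1)) F) :
    (Nmat k x s Y).det = x k * (Nmat k x (s - 1) (Tmat k x * Y)).det := by
  obtain ⟨m, rfl⟩ : ∃ m, s = m + 1 := ⟨s - 1, by omega⟩
  have hpivot : Nmat k x (m + 1) Y 0 0 = x k := by
    rw [Nmat_apply]
    simp [bandCornerEntry]
  rw [det_eq_mul_det_schur _ (hpivot ▸ hx), hpivot, Nat.add_sub_cancel]
  congr 2
  ext p q
  simp only [of_apply, Nmat_apply, Fin.val_succ, Fin.val_zero, extendByZero_Tmat_mul,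
    bandCornerEntry_schur k x hk (show 2 * k - 2 ≤ m by omega)]

/-- One step of Gaussian elimination: for `2k-1 ≤ s ≤ n` and any
`(k-1) × (k-1)` matrix `Y`, `det N_s(Y) = x_k * det N_{s-1}(T Y)`. -/
theorem stmt_1 {F : Type*} [Field F] (k n : ℕ) (hk : 2 ≤ k) (hn : 2 * k - 1 ≤ n)
    (x : ℕ → F) (hx : x k ≠ 0)
    (s : ℕ) (hs1 : 2 * k - 1 ≤ s) (hs2 : s ≤ n)
    (Y : Matrix (Fin (k - 1)) (Fin (k - 1)) F) :
    (Nmat k x s Y).det = x k * (Nmat k x (s - 1) (Tmat k x * Y)).det :=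
  stmt_1_general k hk x hx s hs1 Y
end

section
/- Let F be a field, let k ≥ 2 and n ≥ 2k−2 be integers, and let x_1, …, x_k ∈ F with x_k ≠ 0. Fix an index i with 1 ≤ i ≤ k, and let M be the n×n k-diagonal circulant matrix with diagonal entry x_i, i.e., the matrix whose (p,q) entry equals x_j if there exists j ∈ {1,…,k} with j ≡ i + q − p (mod n), and equals 0 otherwise. Let A = D be the (k−1)×(k−1) lower-triangular Toeplitz matrix with (p,q) entry x_{k+q−p} for q ≤ p and 0 otherwise; let B = C be the (k−1)×(k−1) upper-triangular Toeplitz matrix with (p,q) entry x_{1+q−p} for q ≥ p and 0 otherwise; and let T be the (k−1)×(k−1) matrix with (T)_{p,1} = −x_{k−p}/x_k for 1 ≤ p ≤ k−1, (T)_{p,p+1} = 1 for 1 ≤ p ≤ k−2, and 0 otherwise. Then det M = (−1)^{(k−i)(n−k+i)} · x_k^{n−k+1} · det(D − C A^{−1} T^{n−2k+2} B). -/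
/-!
Shifting the columns of `M` by `k - i`, a permutation of sign `(-1) ^ ((n - 1) (k - i))`, turns
`M` into the circulant matrix `p, q ↦ c_{(p - q) mod n}` of the polynomial
`c = x_k + x_{k-1} X + ⋯ + x_1 X^{k-1}`. Cut it into blocks of sizes `s = n - k + 1` and `k - 1`.
The upper left block is the lower triangular Toeplitz matrix of `c`: its determinant is `x_k ^ s`
and its inverse is the lower triangular Toeplitz matrix of the power series `c⁻¹`. The off-diagonal
blocks are `B` padded with zeros, so the Schur complement is `A - B Y B`, where `Y` is the
`(k-1) × (k-1)` window of that inverse starting `m = n - 2k + 2` rows down. The coefficients of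
`c⁻¹` obey the linear recurrence with companion matrix `T`, which makes `Y = A⁻¹ T ^ m`.
-/

open Matrix PowerSeries

theorem Matrix.mul_eq_submatrix_mul_submatrix {l n n' o α : Type*} [Fintype n] [Fintype n']
    [NonUnitalNonAssocSemiring α] (A : Matrix l n α) (B : Matrix n o α) {ι : n' → n}
    (hι : Function.Injective ι) (h : ∀ r c, ∀ a ∉ Set.range ι, A r a * B a c = 0) :
    A * B = A.submatrix id ι * B.submatrix ι id := by
  ext r c
  exact (Fintype.sum_of_injective ι hι _ _ (h r c) fun _ => rfl).symm

theorem Matrix.det_eq_sign_mul_det_submatrix {n R : Type*} [DecidableEq n] [Fintype n]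
    [CommRing R] (M : Matrix n n R) (σ : Equiv.Perm n) :
    M.det = Equiv.Perm.sign σ * (M.submatrix id σ).det := by
  rw [det_permute', ← mul_assoc, ← Int.cast_mul, ← Units.val_mul, Int.units_mul_self,
    Units.val_one, Int.cast_one, one_mul]

namespace ZMod

theorem val_natCast_sub_natCast {n a b : ℕ} [NeZero n] (ha : a < n) (hb : b < n) :
    ((a : ZMod n) - b).val = if b ≤ a then a - b else n + a - b := by
  split_ifs with hba
  · rw [← Nat.cast_sub hba, val_natCast, Nat.mod_eq_of_lt (by omega)]
  · have : (a : ZMod n) - b = ((n + a - b : ℕ) : ZMod n) := by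
      rw [Nat.cast_sub (by omega), Nat.cast_add, natCast_self, zero_add]
    rw [this, val_natCast, Nat.mod_eq_of_lt (by omega)]

open Fin.CommRing in
theorem finEquiv_apply {n : ℕ} [NeZero n] (p : Fin n) : finEquiv n p = (p.val : ZMod n) := by
  conv_lhs => rw [← Fin.cast_val_eq_self p]
  exact map_natCast (finEquiv n) p.val

theorem sign_addRight_natCast (n c : ℕ) [NeZero n] :
    Equiv.Perm.sign (Equiv.addRight (c : ZMod n)) = (-1) ^ ((n - 1) * c) := by
  have hrot : Equiv.addRight (1 : ZMod n) = (finEquiv n).toEquiv.permCongr (finRotate n) := by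
    ext z
    simp [Equiv.permCongr_apply, finRotate_apply]
  have hpow : Equiv.addRight (c : ZMod n) = Equiv.addRight 1 ^ c := by
    induction c with
    | zero => ext; simp
    | succ c ih =>
      rw [pow_succ, ← ih]
      ext z
      simp only [Equiv.Perm.mul_apply, Equiv.coe_addRight, Nat.cast_succ]
      ring
  rw [hpow, map_pow, hrot, Equiv.Perm.sign_permCongr, sign_finRotate, ← pow_mul]

end ZMod

def finSumFinEquivZMod {s K n : ℕ} [NeZero n] (h : s + K = n) : Fin s ⊕ Fin K ≃ ZMod n :=
  (finSumFinEquiv.trans (finCongr h)).trans (ZMod.finEquiv n).toEquiv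

section finSumFinEquivZMod

variable {s K n : ℕ} [NeZero n] (h : s + K = n)

theorem finSumFinEquivZMod_inl (p : Fin s) :
    finSumFinEquivZMod h (Sum.inl p) = (p.val : ZMod n) := by
  simp [finSumFinEquivZMod, ZMod.finEquiv_apply]

theorem finSumFinEquivZMod_inr (r : Fin K) :
    finSumFinEquivZMod h (Sum.inr r) = ((s + r.val : ℕ) : ZMod n) := by
  simp [finSumFinEquivZMod, ZMod.finEquiv_apply]

end finSumFinEquivZMod

namespace PowerSeries

section Semiring

variable {R : Type*} [Semiring R]

noncomputable def toeplitz (f : R⟦X⟧) (j : ℕ) {a b : ℕ} : Matrix (Fin a) (Fin b) R :=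
  Matrix.of fun p q => if q.val ≤ j + p.val then coeff (j + p.val - q.val) f else 0

theorem toeplitz_apply_eq_zero {f : R⟦X⟧} {K j a b : ℕ} (hf : ∀ t, K < t → coeff t f = 0)
    {p : Fin a} {q : Fin b} (h : K + q.val < j + p.val) :
    (toeplitz f j : Matrix (Fin a) (Fin b) R) p q = 0 := by
  simp only [toeplitz, of_apply]
  split_ifs
  exacts [hf _ (by omega), rfl]

theorem toeplitz_submatrix (f : R⟦X⟧) {j j' u v a b a' b' : ℕ}
    {φ : Fin a' → Fin a} {ψ : Fin b' → Fin b} (hφ : ∀ p, (φ p).val = u + p.val)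
    (hψ : ∀ q, (ψ q).val = v + q.val) (h : j + u = j' + v) :
    (toeplitz f j).submatrix φ ψ = (toeplitz f j' : Matrix (Fin a') (Fin b') R) := by
  ext p q
  simp only [toeplitz, submatrix_apply, of_apply, hφ, hψ]
  split_ifs <;> first | rfl | omega | (congr 2; omega)

theorem circulant_submatrix_finSumFinEquivZMod (f : R⟦X⟧) {s K n : ℕ} [NeZero n]
    (h : s + K = n) (hKs : K ≤ s) (hf : ∀ t, K < t → coeff t f = 0) :
    (circulant fun z : ZMod n => coeff z.val f).submatrix (finSumFinEquivZMod h)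
        (finSumFinEquivZMod h) =
      fromBlocks (toeplitz f 0) (toeplitz f K) (toeplitz f s) (toeplitz f 0) := by
  ext (p | r) (q | c) <;>
    simp only [submatrix_apply, circulant_apply, finSumFinEquivZMod_inl, finSumFinEquivZMod_inr,
      fromBlocks_apply₁₁, fromBlocks_apply₁₂, fromBlocks_apply₂₁, fromBlocks_apply₂₂, toeplitz,
      of_apply] <;>
    rw [ZMod.val_natCast_sub_natCast (by omega) (by omega)] <;>
    split_ifs <;>
    first | rfl | omega | (congr 2; omega) | exact hf _ (by omega)

end Semiring

section CommSemiring

variable {R : Type*} [CommSemiring R] {N : ℕ}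

theorem toeplitz_one : (toeplitz 1 0 : Matrix (Fin N) (Fin N) R) = 1 := by
  ext p q
  simp only [toeplitz, of_apply, zero_add, coeff_one, one_apply, Fin.ext_iff]
  split_ifs <;> first | rfl | omega

theorem toeplitz_mul (f g : R⟦X⟧) :
    (toeplitz (f * g) 0 : Matrix (Fin N) (Fin N) R) = toeplitz f 0 * toeplitz g 0 := by
  ext p q
  simp only [toeplitz, of_apply, mul_apply, coeff_mul, zero_add, ite_mul, mul_ite, zero_mul,
    mul_zero]
  split_ifs with hqp
  · simp_rw [← ite_and, ← Finset.sum_filter]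
    refine Finset.sum_bij' (fun ab h => ⟨q.val + ab.2, ?_⟩)
      (fun s _ => (p.val - s.val, s.val - q.val))
      (fun ab h => ?_) (fun s hs => ?_) (fun ab h => ?_) (fun s hs => ?_) (fun ab h => ?_)
    all_goals
      try rw [Finset.HasAntidiagonal.mem_antidiagonal] at h
      try rw [Finset.mem_filter] at hs
    · have := p.isLt; omega
    · simp only [Finset.mem_filter, Finset.mem_univ, true_and]; omega
    · rw [Finset.HasAntidiagonal.mem_antidiagonal]; omega
    · ext <;> dsimp only <;> omega
    · ext; dsimp only; omega
    · dsimp only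
      rw [show p.val - (q.val + ab.2) = ab.1 by omega, Nat.add_sub_cancel_left]
  · refine (Finset.sum_eq_zero fun s _ => ?_).symm
    split_ifs <;> first | rfl | omega

end CommSemiring

theorem det_toeplitz_zero {R : Type*} [CommRing R] (f : R⟦X⟧) {N : ℕ} :
    (toeplitz f 0 : Matrix (Fin N) (Fin N) R).det = constantCoeff f ^ N := by
  rw [det_of_isLowerTriangular (toeplitz f 0) fun p q hpq => if_neg (by simpa using hpq)]
  simp [toeplitz]

section Field

variable {F : Type*} [Field F] {K : ℕ}

noncomputable def companion (f : F⟦X⟧) : Matrix (Fin K) (Fin K) F :=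
  Matrix.of fun p q => if q.val = 0 then -coeff (p.val + 1) f / constantCoeff f
    else if q.val = p.val + 1 then 1 else 0

theorem toeplitz_mul_toeplitz_inv (f : F⟦X⟧) (h0 : constantCoeff f ≠ 0) {N : ℕ} :
    (toeplitz f 0 : Matrix (Fin N) (Fin N) F) * toeplitz f⁻¹ 0 = 1 := by
  rw [← toeplitz_mul, PowerSeries.mul_inv_cancel f h0, toeplitz_one]

theorem coeff_inv_succ (f : F⟦X⟧) (h0 : constantCoeff f ≠ 0)
    (hf : ∀ t, K < t → coeff t f = 0) (d : ℕ) :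
    coeff (d + 1) f⁻¹ = ∑ s : Fin K,
      (if s.val ≤ d then coeff (d - s.val) f⁻¹ else 0) * (-coeff (s.val + 1) f / constantCoeff f) := by
  have key := congrArg (coeff (d + 1)) (PowerSeries.mul_inv_cancel f h0)
  rw [coeff_mul, Finset.Nat.sum_antidiagonal_eq_sum_range_succ_mk, Finset.sum_range_succ',
    coeff_one, if_neg d.succ_ne_zero] at key
  simp only [Nat.add_sub_add_right, Nat.sub_zero, coeff_zero_eq_constantCoeff] at key
  set g : ℕ → F := fun t => coeff (t + 1) f * coeff (d - t) f⁻¹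
  have hsum : ∑ s : Fin K, (if s.val ≤ d then g s else 0) = ∑ t ∈ Finset.range (d + 1), g t :=
    calc ∑ s : Fin K, (if s.val ≤ d then g s else 0)
        = ∑ t ∈ Finset.range K with t ≤ d, g t := by
          rw [Finset.sum_filter, Fin.sum_univ_eq_sum_range (fun t => if t ≤ d then g t else 0)]
      _ = ∑ t ∈ Finset.range (d + 1) with t < K, g t := by
          congr 1; ext t; simp only [Finset.mem_filter, Finset.mem_range]; omega
      _ = ∑ t ∈ Finset.range (d + 1), g t := Finset.sum_filter_of_ne fun t _ hg => by
          by_contra ht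
          exact hg (by simp only [g, hf (t + 1) (by omega), zero_mul])
  have hrhs : ∑ s : Fin K, (if s.val ≤ d then coeff (d - s.val) f⁻¹ else 0) *
      (-coeff (s.val + 1) f / constantCoeff f) =
        -(∑ s : Fin K, if s.val ≤ d then g s else 0) / constantCoeff f := by
    rw [neg_div, Finset.sum_div, ← Finset.sum_neg_distrib]
    refine Finset.sum_congr rfl fun s _ => ?_
    split_ifs <;> ring
  rw [hrhs, hsum, eq_div_iff h0]
  linear_combination key

theorem toeplitz_inv_mul_companion (f : F⟦X⟧) (h0 : constantCoeff f ≠ 0)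
    (hf : ∀ t, K < t → coeff t f = 0) (j : ℕ) :
    (toeplitz f⁻¹ j : Matrix (Fin K) (Fin K) F) * companion f = toeplitz f⁻¹ (j + 1) := by
  ext r c
  rw [mul_apply]
  by_cases hc : c.val = 0
  · simp only [toeplitz, companion, of_apply, hc, if_true, zero_le, Nat.sub_zero]
    rw [Nat.add_right_comm, coeff_inv_succ f h0 hf (j + r.val)]
  · rw [Fintype.sum_eq_single ⟨c.val - 1, by omega⟩ fun s hs => ?_]
    · simp only [toeplitz, companion, of_apply, hc, if_false]
      rw [if_pos (show c.val = c.val - 1 + 1 by omega), mul_one]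
      split_ifs <;> first | rfl | omega | (congr 2; omega)
    · simp only [companion, of_apply, hc, if_false]
      rw [if_neg fun h => hs (Fin.ext (by simp; omega)), mul_zero]

theorem toeplitz_inv_mul_companion_pow (f : F⟦X⟧) (h0 : constantCoeff f ≠ 0)
    (hf : ∀ t, K < t → coeff t f = 0) (m : ℕ) :
    (toeplitz f⁻¹ 0 : Matrix (Fin K) (Fin K) F) * companion f ^ m = toeplitz f⁻¹ m := by
  induction m with
  | zero => rw [pow_zero, Matrix.mul_one]
  | succ m ih => rw [pow_succ, ← Matrix.mul_assoc, ih, toeplitz_inv_mul_companion f h0 hf]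

theorem toeplitz_mul_toeplitz_inv_mul_toeplitz (f : F⟦X⟧) {m : ℕ}
    (hf : ∀ t, K < t → coeff t f = 0) :
    (toeplitz f (m + K) : Matrix (Fin K) (Fin (m + K)) F) *
        (toeplitz f⁻¹ 0 : Matrix (Fin (m + K)) (Fin (m + K)) F) *
        (toeplitz f K : Matrix (Fin (m + K)) (Fin K) F) =
      (toeplitz f K : Matrix (Fin K) (Fin K) F) * toeplitz f⁻¹ m * toeplitz f K := by
  have hlow : ∀ a ∉ Set.range (Fin.natAdd m), ∀ r : Fin K,
      (toeplitz f (m + K) : Matrix (Fin K) (Fin (m + K)) F) r a = 0 := fun a ha r =>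
    toeplitz_apply_eq_zero hf <| by
      by_contra
      exact ha ⟨⟨a.val - m, by omega⟩, Fin.ext (by simp; omega)⟩
  have hup : ∀ a ∉ Set.range (Fin.castLE (Nat.le_add_left K m)), ∀ c : Fin K,
      (toeplitz f K : Matrix (Fin (m + K)) (Fin K) F) a c = 0 := fun a ha c =>
    toeplitz_apply_eq_zero hf <| by
      by_contra
      exact ha ⟨⟨a.val, by omega⟩, rfl⟩
  rw [Matrix.mul_assoc, mul_eq_submatrix_mul_submatrix _ _ (Fin.natAdd_injective _ m)
      fun r c a ha => by rw [hlow a ha, zero_mul],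
    submatrix_mul _ _ _ id _ Function.bijective_id, submatrix_id_id,
    mul_eq_submatrix_mul_submatrix ((toeplitz f⁻¹ 0).submatrix (Fin.natAdd m) id) _
      (Fin.castLE_injective _) fun r c a ha => by rw [hup a ha, mul_zero],
    ← Matrix.mul_assoc, submatrix_submatrix, Function.comp_id, Function.id_comp]
  congr 2
  · exact toeplitz_submatrix f (u := 0) (v := m) (fun _ => (zero_add _).symm) (fun _ => rfl)
      (by omega)
  · exact toeplitz_submatrix f⁻¹ (u := m) (v := 0) (fun _ => rfl) (fun _ => (zero_add _).symm)
      (by omega)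

theorem det_circulant_coeff (f : F⟦X⟧) (h0 : constantCoeff f ≠ 0)
    (hf : ∀ t, K < t → coeff t f = 0) {m n : ℕ} [NeZero n] (hn : m + K + K = n) :
    (circulant fun z : ZMod n => coeff z.val f).det = constantCoeff f ^ (m + K) *
      ((toeplitz f 0 : Matrix (Fin K) (Fin K) F) -
        toeplitz f K * (toeplitz f 0)⁻¹ * companion f ^ m * toeplitz f K).det := by
  let : Invertible (toeplitz f 0 : Matrix (Fin (m + K)) (Fin (m + K)) F) :=
    invertibleOfRightInverse _ _ (toeplitz_mul_toeplitz_inv f h0)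
  rw [← det_submatrix_equiv_self (finSumFinEquivZMod hn),
    circulant_submatrix_finSumFinEquivZMod f hn (by omega) hf, det_fromBlocks₁₁, det_toeplitz_zero,
    show ⅟(toeplitz f 0 : Matrix (Fin (m + K)) (Fin (m + K)) F) = toeplitz f⁻¹ 0 from rfl,
    toeplitz_mul_toeplitz_inv_mul_toeplitz f hf, inv_eq_right_inv (toeplitz_mul_toeplitz_inv f h0),
    Matrix.mul_assoc (toeplitz f K) (toeplitz f⁻¹ 0), toeplitz_inv_mul_companion_pow f h0 hf]

end Field

end PowerSeries

theorem submatrix_addRight_eq_circulant {F : Type*} [Zero F] {k n i : ℕ} [NeZero n]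
    (hkn : k ≤ n) (hik : i ≤ k) (x : ℕ → F) (M : Matrix (ZMod n) (ZMod n) F)
    (hMx : ∀ p q : ZMod n, ∀ j : ℕ, 1 ≤ j → j ≤ k →
      (j : ZMod n) = (i : ZMod n) + q - p → M p q = x j)
    (hM0 : ∀ p q : ZMod n, (∀ j : ℕ, 1 ≤ j → j ≤ k →
      (j : ZMod n) ≠ (i : ZMod n) + q - p) → M p q = 0) :
    M.submatrix id (Equiv.addRight ((k - i : ℕ) : ZMod n)) =
      circulant fun z : ZMod n => if z.val < k then x (k - z.val) else 0 := by
  ext p q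
  simp only [submatrix_apply, id, Equiv.coe_addRight, circulant_apply]
  have key : ∀ j, 1 ≤ j → j ≤ k →
      ((j : ZMod n) = i + (q + ((k - i : ℕ) : ZMod n)) - p ↔ (p - q).val = k - j) := by
    intro j hj1 hjk
    rw [← ZMod.val_natCast_of_lt (show k - j < n by omega), (ZMod.val_injective n).eq_iff,
      Nat.cast_sub hik, Nat.cast_sub hjk]
    constructor <;> intro h <;> linear_combination h
  split_ifs with hlt
  · exact hMx _ _ _ (by omega) (by omega) ((key _ (by omega) (by omega)).2 (by omega))
  · exact hM0 _ _ fun j hj1 hjk hj => hlt (by rw [(key j hj1 hjk).1 hj]; omega)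

theorem neg_one_pow_sub_one_mul_sub {R : Type*} [Monoid R] [HasDistribNeg R] {N k i : ℕ}
    (hik : i ≤ k) (hkN : k ≤ N) :
    (-1 : R) ^ ((N - 1) * (k - i)) = (-1 : R) ^ ((k - i) * (N + i - k)) := by
  have h : (N - 1) * (k - i) = (k - i) * (N + i - k) + (k - i) * (k - i - 1) := by
    rcases Nat.eq_zero_or_pos (k - i) with hki | hki
    · rw [hki]; ring
    · rw [show N - 1 = (N + i - k) + (k - i - 1) by omega]; ring
  rw [h, pow_add, (Nat.even_mul_pred_self _).neg_one_pow, mul_one]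

/-- Rows and columns of `M` are labelled cyclically by `ZMod n`; the `Fin` indices of the
`(k - 1) × (k - 1)` blocks are the 0-based versions of the paper's 1-based indices. -/
theorem stmt_2_general {F : Type*} [Field F] (k n : ℕ) [NeZero n]
    (hk : 2 ≤ k) (hn : 2 * k - 2 ≤ n)
    (x : ℕ → F) (hx : x k ≠ 0)
    (i : ℕ) (hik : i ≤ k)
    (M : Matrix (ZMod n) (ZMod n) F)
    (hMx : ∀ p q : ZMod n, ∀ j : ℕ, 1 ≤ j → j ≤ k →
      (j : ZMod n) = (i : ZMod n) + q - p → M p q = x j)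
    (hM0 : ∀ p q : ZMod n, (∀ j : ℕ, 1 ≤ j → j ≤ k →
      (j : ZMod n) ≠ (i : ZMod n) + q - p) → M p q = 0)
    (A D B C T : Matrix (Fin (k - 1)) (Fin (k - 1)) F)
    (hA : ∀ p q : Fin (k - 1),
      A p q = if q.val ≤ p.val then x (k - (p.val - q.val)) else 0)
    (hD : D = A)
    (hB : ∀ p q : Fin (k - 1),
      B p q = if p.val ≤ q.val then x (1 + (q.val - p.val)) else 0)
    (hC : C = B)
    (hT : ∀ p q : Fin (k - 1),
      T p q = if q.val = 0 then -x (k - 1 - p.val) / x k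
        else if q.val = p.val + 1 then 1 else 0) :
    M.det = (-1 : F) ^ ((k - i) * (n + i - k)) * x k ^ (n + 1 - k) *
      (D - C * A⁻¹ * T ^ (n + 2 - 2 * k) * B).det := by
  obtain ⟨m, rfl⟩ : ∃ m, n = m + (k - 1) + (k - 1) := ⟨n + 2 - 2 * k, by omega⟩
  set P : F⟦X⟧ := PowerSeries.mk fun t => if t < k then x (k - t) else 0
  have hP0 : constantCoeff P = x k := by
    rw [← coeff_zero_eq_constantCoeff_apply, coeff_mk, if_pos (by omega), Nat.sub_zero]
  have hPdeg : ∀ t, k - 1 < t → coeff t P = 0 := fun t ht => by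
    rw [coeff_mk, if_neg (by omega)]
  have hAP : A = toeplitz P 0 := by
    ext p q
    rw [hA, toeplitz, of_apply, coeff_mk]
    split_ifs <;> first | rfl | omega | (congr 1; omega)
  have hBP : B = toeplitz P (k - 1) := by
    ext p q
    rw [hB, toeplitz, of_apply, coeff_mk]
    split_ifs <;> first | rfl | omega | (congr 1; omega)
  have hTP : T = companion P := by
    ext p q
    rw [hT, companion, of_apply, coeff_mk, hP0, if_pos (show p.val + 1 < k by omega), Nat.sub_sub,
      add_comm 1]
  have hcirc : M.submatrix id (Equiv.addRight ((k - i : ℕ) : ZMod _)) =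
      circulant fun z : ZMod _ => coeff z.val P := by
    rw [submatrix_addRight_eq_circulant (by omega) hik x M hMx hM0]
    simp only [P, coeff_mk]
  rw [M.det_eq_sign_mul_det_submatrix (Equiv.addRight ((k - i : ℕ) : ZMod _)), hcirc,
    det_circulant_coeff P (hP0 ▸ hx) hPdeg rfl, ZMod.sign_addRight_natCast, hP0, hD, hC, hAP,
    hBP, hTP]
  push_cast
  rw [neg_one_pow_sub_one_mul_sub hik (by omega),
    show m + (k - 1) + (k - 1) + 2 - 2 * k = m by omega,
    show m + (k - 1) + (k - 1) + 1 - k = m + (k - 1) by omega, ← mul_assoc]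

/-- The determinant of the `n × n` `k`-diagonal circulant matrix `M`
with diagonal entry `x_i` (the `(p,q)` entry of `M` equals `x_j` if some
`j ∈ {1,…,k}` satisfies `j ≡ i + q - p (mod n)`, and `0` otherwise) equals
`(-1)^((k-i)(n-k+i)) * x_k^(n-k+1) * det (D - C A⁻¹ T^(n-2k+2) B)`.
Rows and columns are labelled cyclically by `ZMod n`; `Fin` indices of the
`(k-1) × (k-1)` blocks are 0-based versions of 1-based indices. -/
theorem stmt_2 {F : Type*} [Field F] (k n : ℕ) [NeZero n]
    (hk : 2 ≤ k) (hn : 2 * k - 2 ≤ n)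
    (x : ℕ → F) (hx : x k ≠ 0)
    (i : ℕ) (hi1 : 1 ≤ i) (hik : i ≤ k)
    (M : Matrix (ZMod n) (ZMod n) F)
    (hMx : ∀ p q : ZMod n, ∀ j : ℕ, 1 ≤ j → j ≤ k →
      (j : ZMod n) = (i : ZMod n) + q - p → M p q = x j)
    (hM0 : ∀ p q : ZMod n, (∀ j : ℕ, 1 ≤ j → j ≤ k →
      (j : ZMod n) ≠ (i : ZMod n) + q - p) → M p q = 0)
    (A D B C T : Matrix (Fin (k - 1)) (Fin (k - 1)) F)
    (hA : ∀ p q : Fin (k - 1),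
      A p q = if q.val ≤ p.val then x (k - (p.val - q.val)) else 0)
    (hD : D = A)
    (hB : ∀ p q : Fin (k - 1),
      B p q = if p.val ≤ q.val then x (1 + (q.val - p.val)) else 0)
    (hC : C = B)
    (hT : ∀ p q : Fin (k - 1),
      T p q = if q.val = 0 then -x (k - 1 - p.val) / x k
        else if q.val = p.val + 1 then 1 else 0) :
    M.det = (-1 : F) ^ ((k - i) * (n + i - k)) * x k ^ (n + 1 - k) *
      (D - C * A⁻¹ * T ^ (n + 2 - 2 * k) * B).det :=
  stmt_2_general k n hk hn x hx i hik M hMx hM0 A D B C T hA hD hB hC hT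
end

section
/- Let F be a field, let k ≥ 2 and n ≥ 2k−2 be integers, and for each p ∈ {1,…,n} (indices cyclic modulo n) let x_1^{(p)}, …, x_k^{(p)} ∈ F with x_k^{(p)} ≠ 0. Let M be the n×n k-diagonal cyclic banded matrix with diagonal entry position 2: the matrix whose (p,q) entry equals x_j^{(p)} if there exists j ∈ {1,…,k} with j ≡ 2 + q − p (mod n), and equals 0 otherwise; assume M is invertible. Then for all row and column indices i, j ∈ {1,…,n} (all indices and superscripts reduced modulo n into {1,…,n}) such that i − k + 2 ≢ j (mod n), the entries of M⁻¹ satisfy (M⁻¹)_{i,j} = −( x_1^{(i−k+2)} (M⁻¹)_{i−k+1,j} + x_2^{(i−k+2)} (M⁻¹)_{i−k+2,j} + ⋯ + x_{k−1}^{(i−k+2)} (M⁻¹)_{i−1,j} ) / x_k^{(i−k+2)}. -/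
open Matrix

/-- Column recurrence for the inverse of a `k`-diagonal cyclic banded
matrix `M` with diagonal entry position `2`: for `i, j ∈ {1,…,n}` with
`i - k + 2 ≢ j (mod n)`,
`(M⁻¹)_{i,j} = -(x_1^{(i-k+2)} (M⁻¹)_{i-k+1,j} + ⋯ + x_{k-1}^{(i-k+2)} (M⁻¹)_{i-1,j})
  / x_k^{(i-k+2)}`.
Rows and columns of `M`, as well as superscripts (reduced modulo `n`), are labelled
cyclically by `ZMod n`; index arithmetic is performed via the cast `ℤ → ZMod n`. -/
theorem stmt_8 {F : Type*} [Field F] (k n : ℕ) [NeZero n]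
    (hk : 2 ≤ k) (hn : 2 * k - 2 ≤ n)
    (x : ℕ → ZMod n → F) (hx : ∀ p : ZMod n, x k p ≠ 0)
    (M : Matrix (ZMod n) (ZMod n) F)
    (hMx : ∀ p q : ZMod n, ∀ j : ℕ, 1 ≤ j → j ≤ k →
      (j : ZMod n) = (2 : ZMod n) + q - p → M p q = x j p)
    (hM0 : ∀ p q : ZMod n, (∀ j : ℕ, 1 ≤ j → j ≤ k →
      (j : ZMod n) ≠ (2 : ZMod n) + q - p) → M p q = 0)
    (hM : IsUnit M.det)
    (i j : ℕ) (hi1 : 1 ≤ i) (hin : i ≤ n) (hj1 : 1 ≤ j) (hjn : j ≤ n)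
    (hij : (((i : ℤ) - k + 2 : ℤ) : ZMod n) ≠ (j : ZMod n)) :
    M⁻¹ (i : ZMod n) (j : ZMod n) =
      -(∑ t ∈ Finset.Icc 1 (k - 1),
          x t (((i : ℤ) - k + 2 : ℤ) : ZMod n) *
            M⁻¹ (((i : ℤ) - k + t : ℤ) : ZMod n) (j : ZMod n))
        / x k (((i : ℤ) - k + 2 : ℤ) : ZMod n) := by
  have hkn : k ≤ n := by omega
  set p : ZMod n := (((i : ℤ) - k + 2 : ℤ) : ZMod n) with hp
  have hMM : M * M⁻¹ = 1 := Matrix.mul_nonsing_inv M hM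
  have h0 : ∑ q, M p q * M⁻¹ q (j : ZMod n) = 0 := by
    have h := congrFun (congrFun hMM p) (j : ZMod n)
    rw [Matrix.mul_apply] at h
    rw [h, Matrix.one_apply_ne hij]
  set f : ℕ → ZMod n := fun t => p + (t : ZMod n) - 2 with hf
  set S : Finset (ZMod n) := (Finset.Icc 1 k).image f with hS
  have hinj : ∀ a ∈ Finset.Icc 1 k, ∀ b ∈ Finset.Icc 1 k, f a = f b → a = b := by
    intro a ha b hb hab
    simp only [Finset.mem_Icc] at ha hb
    have hab' : (a : ZMod n) = (b : ZMod n) := by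
      simp only [hf] at hab
      linear_combination hab
    have h2 : a ≡ b [MOD n] := (ZMod.natCast_eq_natCast_iff a b n).mp hab'
    rcases le_total a b with h | h
    · rcases Nat.eq_or_lt_of_le h with h' | h'
      · exact h'
      · have hd := (Nat.modEq_iff_dvd' h).mp h2
        have := Nat.le_of_dvd (by omega) hd
        omega
    · rcases Nat.eq_or_lt_of_le h with h' | h'
      · exact h'.symm
      · have hd := (Nat.modEq_iff_dvd' h).mp h2.symm
        have := Nat.le_of_dvd (by omega) hd
        omega
  have hsum : ∑ q, M p q * M⁻¹ q (j : ZMod n)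
      = ∑ t ∈ Finset.Icc 1 k, x t p * M⁻¹ (f t) (j : ZMod n) := by
    rw [show (Finset.univ : Finset (ZMod n)) = Finset.univ from rfl]
    rw [← Finset.sum_subset (Finset.subset_univ S)
      (fun q _ hq => by
        have : M p q = 0 := by
          apply hM0
          intro t ht1 htk hteq
          apply hq
          rw [hS]
          exact Finset.mem_image.mpr ⟨t, Finset.mem_Icc.mpr ⟨ht1, htk⟩, by
            rw [hf]; simp only []; linear_combination hteq⟩
        rw [this, zero_mul])]
    rw [hS, Finset.sum_image hinj]
    refine Finset.sum_congr rfl (fun t ht => ?_)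
    simp only [Finset.mem_Icc] at ht
    rw [hMx p (f t) t ht.1 ht.2 (by rw [hf]; ring)]
  have hsplit : Finset.Icc 1 k = insert k (Finset.Icc 1 (k - 1)) := by
    ext t; simp only [Finset.mem_Icc, Finset.mem_insert]; omega
  rw [hsum, hsplit, Finset.sum_insert (by simp only [Finset.mem_Icc]; omega)] at h0
  have hfk : f k = (i : ZMod n) := by
    rw [hf, hp]; push_cast; ring
  have hft : ∀ t ∈ Finset.Icc 1 (k - 1), f t = (((i : ℤ) - k + t : ℤ) : ZMod n) := by
    intro t _
    rw [hf, hp]; push_cast; ring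
  rw [hfk, Finset.sum_congr rfl (fun t ht => by rw [hft t ht])] at h0
  rw [eq_div_iff (hx p)]
  linear_combination h0
end
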